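/- arXiv:0912.1132 — 8 statements merged into one kernel-verified Lean document; each statement's English description precedes it below -/
import Mathlib

section
/- Let n ≥ 1 and let λ₁, …, λₙ be positive real numbers. There exist vectors x₁, …, xₙ in ℝ³ with ‖xⱼ‖ = λⱼ for each j and x₁ + ⋯ + xₙ = 0 if and only if λⱼ ≤ Σ_{i ≠ j} λᵢ for every j = 1, …, n. -/
/-!
Necessity is the triangle inequality for `x j = -∑_{i ≠ j} x i`. For sufficiency, let `λⱼ` be
the longest side. Since every other side is at most `λⱼ`, adding them one at a time gives a set
`B` of them whose total `b` lies in `[Λ/2 - λⱼ, Λ/2]`, where `Λ = ∑ λᵢ`; with `c = Λ - λⱼ - b`,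
each of `λⱼ, b, c` is at most `Λ/2`, so there is a planar triangle with these sides. Laying the
sides of `B` along the edge of length `b` and the remaining ones along the edge of length `c`
closes the polygon.
-/

open Finset

section ClosedPolygons

variable (E : Type*) [SeminormedAddCommGroup E] {ι : Type*} [Fintype ι]

def closedPolygons (f : ι → ℝ) : Set (ι → E) :=
  {x | (∀ i, ‖x i‖ = f i) ∧ ∑ i, x i = 0}

variable {E} {f : ι → ℝ}

theorem le_sum_erase_of_mem_closedPolygons [DecidableEq ι] {x : ι → E}
    (hx : x ∈ closedPolygons E f) (j : ι) : f j ≤ ∑ i ∈ univ.erase j, f i := by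
  have hxj : x j = -∑ i ∈ univ.erase j, x i :=
    eq_neg_of_add_eq_zero_left ((add_sum_erase _ x (mem_univ j)).trans hx.2)
  calc f j = ‖∑ i ∈ univ.erase j, x i‖ := by rw [← hx.1 j, hxj, norm_neg]
    _ ≤ ∑ i ∈ univ.erase j, ‖x i‖ := norm_sum_le _ _
    _ = ∑ i ∈ univ.erase j, f i := sum_congr rfl fun i _ => hx.1 i

theorem LinearIsometry.comp_mem_closedPolygons {F : Type*} [SeminormedAddCommGroup F]
    [Module ℝ E] [Module ℝ F] (L : E →ₗᵢ[ℝ] F) {x : ι → E} (hx : x ∈ closedPolygons E f) :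
    L ∘ x ∈ closedPolygons F f :=
  ⟨fun i => (L.norm_map _).trans (hx.1 i), by simp [← map_sum, hx.2]⟩

end ClosedPolygons

theorem le_sum_erase_iff_two_mul_le_sum {ι : Type*} [Fintype ι] [DecidableEq ι]
    (f : ι → ℝ) (j : ι) : f j ≤ ∑ i ∈ univ.erase j, f i ↔ 2 * f j ≤ ∑ i, f i := by
  rw [← add_sum_erase _ f (mem_univ j)]
  constructor <;> intro <;> linarith

theorem exists_norm_eq_one_smul_eq {E : Type*} [NormedAddCommGroup E] [NormedSpace ℝ E]
    [Nontrivial E] (z : E) : ∃ u : E, ‖u‖ = 1 ∧ ‖z‖ • u = z := by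
  rcases eq_or_ne z 0 with rfl | hz
  · obtain ⟨u, hu⟩ := exists_norm_eq E zero_le_one
    exact ⟨u, hu, by simp⟩
  · refine ⟨‖z‖⁻¹ • z, norm_smul_inv_norm hz, ?_⟩
    rw [smul_smul, mul_inv_cancel₀ (norm_ne_zero_iff.2 hz), one_smul]

theorem closedPolygons_nonempty_of_fiberwise {E : Type*} [NormedAddCommGroup E]
    [NormedSpace ℝ E] [Nontrivial E] {ι κ : Type*} [Fintype ι] [Fintype κ] [DecidableEq κ]
    {f : ι → ℝ} (hf : ∀ i, 0 ≤ f i) (g : ι → κ)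
    (h : (closedPolygons E fun k => ∑ i with g i = k, f i).Nonempty) :
    (closedPolygons E f).Nonempty := by
  obtain ⟨z, hz_norm, hz_sum⟩ := h
  choose u hu_norm hu using fun k => exists_norm_eq_one_smul_eq (z k)
  refine ⟨fun i => f i • u (g i), fun i => by simp [norm_smul, hu_norm, abs_of_nonneg (hf i)], ?_⟩
  calc ∑ i, f i • u (g i) = ∑ k, ∑ i with g i = k, f i • u (g i) := (sum_fiberwise _ g _).symm
    _ = ∑ k, (∑ i with g i = k, f i) • u k := by
      refine sum_congr rfl fun k _ => ?_
      rw [sum_smul]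
      exact sum_congr rfl fun i hi => by rw [(mem_filter.1 hi).2]
    _ = 0 := by simp only [← hz_norm, hu, hz_sum]

theorem Finset.exists_subset_sum_mem_Icc {ι : Type*} (f : ι → ℝ) {M : ℝ} (hM : 0 ≤ M)
    (S : Finset ι) (hS : ∀ i ∈ S, f i ≤ M) {t : ℝ} (ht₀ : 0 ≤ t) (ht : t ≤ ∑ i ∈ S, f i) :
    ∃ B ⊆ S, ∑ i ∈ B, f i ∈ Set.Icc (t - M) t := by
  classical
  induction S using Finset.induction_on generalizing t with
  | empty =>
    rw [sum_empty] at ht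
    exact ⟨∅, subset_refl _, by rw [sum_empty, Set.mem_Icc]; constructor <;> linarith⟩
  | insert a S ha ih =>
    rw [sum_insert ha] at ht
    by_cases hat : f a ≤ t
    · obtain ⟨B, hBS, hB⟩ := ih (fun i hi => hS i (mem_insert_of_mem hi))
        (t := t - f a) (by linarith) (by linarith)
      refine ⟨insert a B, insert_subset_insert a hBS, ?_⟩
      rw [sum_insert fun haB => ha (hBS haB)]
      constructor <;> linarith [hB.1, hB.2]
    · have haM := hS a (mem_insert_self a S)
      exact ⟨∅, empty_subset _, by rw [sum_empty, Set.mem_Icc]; constructor <;> linarith⟩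

theorem exists_fin_three_fiberwise_two_mul_le_sum {ι : Type*} [Fintype ι] {f : ι → ℝ} (hf : ∀ i, 0 ≤ f i)
    (h : ∀ j, 2 * f j ≤ ∑ i, f i) :
    ∃ g : ι → Fin 3, ∀ k, 2 * ∑ i with g i = k, f i ≤ ∑ l, ∑ i with g i = l, f i := by
  classical
  simp only [sum_fiberwise]
  cases isEmpty_or_nonempty ι
  · exact ⟨fun _ => 0, by simp⟩
  obtain ⟨j, hj⟩ := Finite.exists_max f
  have hsum : 0 ≤ ∑ i, f i := sum_nonneg fun i _ => hf i
  obtain ⟨B, hBj, hB⟩ := exists_subset_sum_mem_Icc f (hf j) (univ.erase j) (fun i _ => hj i)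
    (t := (∑ i, f i) / 2) (by linarith) (by rw [sum_erase_eq_sub (mem_univ j)]; linarith [h j])
  let g : ι → Fin 3 := fun i => if i = j then 0 else if i ∈ B then 1 else 2
  have hj_notMem : j ∉ B := fun hjB => (mem_erase.1 (hBj hjB)).1 rfl
  have h0 : (univ.filter fun i => g i = 0) = {j} := by
    ext i; by_cases hij : i = j <;> simp [g, hij, apply_ite (· = (0 : Fin 3))]
  have h1 : (univ.filter fun i => g i = 1) = B := by
    ext i; by_cases hij : i = j <;> simp [g, hij, hj_notMem]
  have htotal := sum_fiberwise univ g f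
  rw [Fin.sum_univ_three, h0, h1, sum_singleton] at htotal
  refine ⟨g, fun k => ?_⟩
  fin_cases k <;> simp only [Fin.zero_eta, Fin.mk_one, Fin.reduceFinMk, h0, h1, sum_singleton]
  · linarith [h j]
  · linarith [hB.2]
  · linarith [hB.1]

theorem exists_complex_triangle {a b c : ℝ} (hab : a ≤ b + c) (hbc : b ≤ a + c)
    (hca : c ≤ a + b) : ∃ u v w : ℂ, ‖u‖ = a ∧ ‖v‖ = b ∧ ‖w‖ = c ∧ u + v + w = 0 := by
  have ha : 0 ≤ a := by linarith
  have hb : 0 ≤ b := by linarith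
  have hc : 0 ≤ c := by linarith
  rcases ha.eq_or_lt with rfl | ha
  · refine ⟨0, b, -b, by simp, by simp [hb], ?_, by simp⟩
    rw [norm_neg, Complex.norm_real, Real.norm_of_nonneg hb]
    linarith
  -- `p + q i` is the vertex at distance `c` from `0` and `b` from `a`
  set p := (a ^ 2 + c ^ 2 - b ^ 2) / (2 * a) with hp
  have hp' : 2 * a * p = a ^ 2 + c ^ 2 - b ^ 2 := by rw [hp]; field_simp
  have hpc : p ^ 2 ≤ c ^ 2 := sq_le_sq' (by nlinarith) (by nlinarith)
  set q := √(c ^ 2 - p ^ 2)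
  have hq' : q ^ 2 = c ^ 2 - p ^ 2 := Real.sq_sqrt (by linarith)
  refine ⟨a, ⟨p - a, q⟩, ⟨-p, -q⟩, by simp [ha.le], ?_, ?_, by apply Complex.ext <;> simp⟩
  · rw [Complex.norm_eq_sqrt_sq_add_sq, ← Real.sqrt_sq hb]
    congr 1; simp only; nlinarith
  · rw [Complex.norm_eq_sqrt_sq_add_sq, ← Real.sqrt_sq hc]
    congr 1; simp only; nlinarith

theorem closedPolygons_complex_fin_three_nonempty {a : Fin 3 → ℝ}
    (h : ∀ k, 2 * a k ≤ ∑ l, a l) : (closedPolygons ℂ a).Nonempty := by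
  have h₀ := h 0
  have h₁ := h 1
  have h₂ := h 2
  simp only [Fin.sum_univ_three] at h₀ h₁ h₂
  obtain ⟨u, v, w, hu, hv, hw, huvw⟩ :=
    exists_complex_triangle (a := a 0) (b := a 1) (c := a 2) (by linarith) (by linarith)
      (by linarith)
  refine ⟨![u, v, w], fun k => ?_, by simpa [Fin.sum_univ_three] using huvw⟩
  fin_cases k <;> simpa

theorem closedPolygons_complex_nonempty {ι : Type*} [Fintype ι] {f : ι → ℝ}
    (hf : ∀ i, 0 ≤ f i) (h : ∀ j, 2 * f j ≤ ∑ i, f i) : (closedPolygons ℂ f).Nonempty := by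
  classical
  obtain ⟨g, hg⟩ := exists_fin_three_fiberwise_two_mul_le_sum hf h
  exact closedPolygons_nonempty_of_fiberwise hf g (closedPolygons_complex_fin_three_nonempty hg)

noncomputable def Complex.toEuclideanSpaceFinThree : ℂ →ₗᵢ[ℝ] EuclideanSpace ℝ (Fin 3) where
  toFun z := !₂[z.re, z.im, 0]
  map_add' z w := by ext i; fin_cases i <;> simp
  map_smul' r z := by ext i; fin_cases i <;> simp
  norm_map' z := by
    simp [EuclideanSpace.norm_eq, Fin.sum_univ_three, Complex.norm_eq_sqrt_sq_add_sq]

theorem polygon_space_nonempty_general (n : ℕ) (lam : Fin n → ℝ)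
    (hpos : ∀ j, 0 < lam j) :
    (∃ x : Fin n → EuclideanSpace ℝ (Fin 3),
      (∀ j, ‖x j‖ = lam j) ∧ ∑ j, x j = 0) ↔
    ∀ j, lam j ≤ ∑ i ∈ Finset.univ.erase j, lam i := by
  refine ⟨fun ⟨x, hx⟩ => le_sum_erase_of_mem_closedPolygons hx, fun h => ?_⟩
  obtain ⟨z, hz⟩ := closedPolygons_complex_nonempty (fun j => (hpos j).le)
    fun j => (le_sum_erase_iff_two_mul_le_sum lam j).1 (h j)
  exact ⟨_, Complex.toEuclideanSpaceFinThree.comp_mem_closedPolygons hz⟩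

/-- The moduli space of closed `n`-gons in `ℝ³` with prescribed side lengths
`λ₁, …, λₙ > 0` is non-empty if and only if each `λⱼ` is at most the sum of the
others. -/
theorem polygon_space_nonempty (n : ℕ) (hn : 1 ≤ n) (lam : Fin n → ℝ)
    (hpos : ∀ j, 0 < lam j) :
    (∃ x : Fin n → EuclideanSpace ℝ (Fin 3),
      (∀ j, ‖x j‖ = lam j) ∧ ∑ j, x j = 0) ↔
    ∀ j, lam j ≤ ∑ i ∈ Finset.univ.erase j, lam i :=
  polygon_space_nonempty_general n lam hpos
end

section
/- Let H be an r×r complex Hermitian matrix and let J = {j₁ < j₂ < … < j_s} ⊆ {1, …, r}. Then Σ_{j ∈ J} λⱼ(H) equals the maximum over partial flags F₁ ⊂ F₂ ⊂ … ⊂ F_s of complex subspaces of ℂʳ with dim F_l = j_l for l = 1, …, s, of the minimum over s-dimensional complex subspaces E ⊆ ℂʳ satisfying dim(E ∩ F_l) ≥ l for all l = 1, …, s, of Tr(H_E). -/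
/-!
Fix an orthonormal eigenbasis `v` of `H`, ordered so that the eigenvalues `μ` are nonincreasing.
For the maximising flag take `F l = span {v i | i ≤ j l}`: an admissible `E` has an orthonormal
basis `u` with `u l ∈ F l` (Gram–Schmidt applied to a basis adapted to the flag `E ⊓ F l`), each
`⟪u l, H u l⟫` is at least `μ (j l)`, and `Tr (H_E)` is the sum of these Rayleigh quotients.

Conversely, for an arbitrary flag `F` put `G t = span {v i | j (s - 1 - t) ≤ i}`. Counting
dimensions, `F l ⊓ G t` has dimension at least `l + t + 2 - s`, which is exactly what is needed
to build, one vector at a time, an `s`-dimensional `E` meeting both flags in the required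
dimensions; an orthonormal basis of `E` adapted to `G` then bounds `Tr (H_E)` above by
`∑ l, μ (j l)`.
-/

/-- The trace of the compression `H_E : E → E` of a complex matrix `H` to a
subspace `E ⊆ ℂʳ` (orthogonal projection composed with restriction); for
Hermitian `H` this is real, and we take the real part. -/
noncomputable def compressionTrace (r : ℕ) (H : Matrix (Fin r) (Fin r) ℂ)
    (E : Submodule ℂ (EuclideanSpace ℂ (Fin r))) : ℝ :=
  (LinearMap.trace ℂ E
    (E.orthogonalProjectionOnto.toLinearMap ∘ₗ Matrix.toEuclideanLin H ∘ₗ E.subtype)).re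

open Module Submodule Finset RCLike
open InnerProductSpace

section Flags

variable {K V : Type*} [DivisionRing K] [AddCommGroup V] [Module K V] [FiniteDimensional K V]

theorem Submodule.exists_finrank_succ_inf_lt {ι : Type*} [LinearOrder ι] [WellFoundedLT ι]
    {A : ι → Submodule K V} (hA : Monotone A) {P B : Submodule K V} (hPB : P ≤ B)
    (hP : finrank K P < finrank K B) :
    ∃ P' : Submodule K V, P ≤ P' ∧ P' ≤ B ∧ finrank K P' = finrank K P + 1 ∧
      ∀ l, ¬A l ⊓ B ≤ P →
        finrank K (A l ⊓ P : Submodule K V) < finrank K (A l ⊓ P' : Submodule K V) := by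
  -- the set of such `l` is an upper set, so a vector taken from its least member serves them all
  obtain ⟨x, hxB, hxP, hxA⟩ : ∃ x ∈ B, x ∉ P ∧ ∀ l, ¬A l ⊓ B ≤ P → x ∈ A l := by
    by_cases hS : ∃ l, ¬A l ⊓ B ≤ P
    · obtain ⟨l₀, hl₀, hmin⟩ := wellFounded_lt.has_min {l | ¬A l ⊓ B ≤ P} hS
      obtain ⟨x, hx, hxP⟩ := SetLike.not_le_iff_exists.mp hl₀
      exact ⟨x, hx.2, hxP, fun l hl => hA (not_lt.mp (hmin l hl)) hx.1⟩
    · obtain ⟨x, hxB, hxP⟩ := SetLike.exists_of_lt (lt_of_le_of_finrank_lt_finrank hPB hP)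
      exact ⟨x, hxB, hxP, fun l hl => absurd ⟨l, hl⟩ hS⟩
  refine ⟨P ⊔ K ∙ x, le_sup_left, sup_le hPB ((span_singleton_le_iff_mem _ _).2 hxB),
    finrank_sup_span_singleton hxP, fun l hl => finrank_lt_finrank_of_lt ?_⟩
  refine lt_of_le_of_ne (inf_le_inf_left _ le_sup_left) fun h => hxP ?_
  have hx : x ∈ A l ⊓ (P ⊔ K ∙ x) := ⟨hxA l hl, mem_sup_right (mem_span_singleton_self x)⟩
  exact (h ▸ hx).2

theorem Submodule.exists_subspace_meeting_two_flags {s : ℕ} {A B : Fin s → Submodule K V}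
    (hA : Monotone A) (hB : Monotone B)
    (hAB : ∀ l t : Fin s, (l : ℕ) + t + 2 ≤ s + finrank K (A l ⊓ B t : Submodule K V)) :
    ∃ E : Submodule K V, finrank K E = s ∧
      (∀ l : Fin s, (l : ℕ) + 1 ≤ finrank K (E ⊓ A l : Submodule K V)) ∧
      ∀ t : Fin s, (t : ℕ) + 1 ≤ finrank K (E ⊓ B t : Submodule K V) := by
  -- `E` is built one vector at a time, the `n`-th taken from `B n`; after `n` steps `A l ⊓ P`
  -- falls short of its final dimension `l + 1` by at most `s - n`
  suffices h : ∀ n ≤ s, ∃ P : Submodule K V, finrank K P = n ∧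
      (∀ t : Fin s, (t : ℕ) < n → (t : ℕ) + 1 ≤ finrank K (P ⊓ B t : Submodule K V)) ∧
      (∀ t : Fin s, n ≤ t → P ≤ B t) ∧
      ∀ l : Fin s, (l : ℕ) + 1 + n ≤ s + finrank K (A l ⊓ P : Submodule K V) by
    obtain ⟨E, hE, hEB, -, hEA⟩ := h s le_rfl
    exact ⟨E, hE, fun l => by have := hEA l; rw [inf_comm] at this; omega, fun t => hEB t t.2⟩
  intro n
  induction n with
  | zero =>
    exact fun _ => ⟨⊥, finrank_bot K V, fun t ht => absurd ht (Nat.not_lt_zero _),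
      fun _ _ => bot_le, fun l => by rw [inf_bot_eq, finrank_bot]; omega⟩
  | succ n ih =>
    intro hn
    obtain ⟨P, hP, hPB, hPB_le, hPA⟩ := ih (Nat.le_of_succ_le hn)
    let b : Fin s := ⟨n, hn⟩
    have hb : (b : ℕ) = n := rfl
    have hB_rank : n < finrank K (B b) := by
      have hlast := hAB ⟨s - 1, by omega⟩ b
      have := finrank_mono (inf_le_right : A ⟨s - 1, by omega⟩ ⊓ B b ≤ B b)
      rw [Fin.val_mk] at hlast
      omega
    obtain ⟨P', hPP', hP'B, hP', hP'A⟩ :=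
      exists_finrank_succ_inf_lt hA (hPB_le b le_rfl) (hP ▸ hB_rank)
    refine ⟨P', by rw [hP', hP], fun t ht => ?_,
      fun t ht => hP'B.trans (hB (Nat.le_of_succ_le ht)), fun l => ?_⟩
    · rcases (Nat.lt_succ_iff_lt_or_eq.mp ht) with ht | ht
      · exact (hPB t ht).trans (finrank_mono (inf_le_inf_right _ hPP'))
      · rw [show t = b from Fin.ext ht, inf_eq_left.mpr hP'B, hP', hP]
    · by_cases hslack : (l : ℕ) + 1 + (n + 1) ≤ s + finrank K (A l ⊓ P : Submodule K V)
      · exact hslack.trans (by gcongr; exact finrank_mono (inf_le_inf_left _ hPP'))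
      · -- `l` is tight, so `A l ⊓ B b` sticks out of `P` and the new vector enlarges `A l ⊓ P`
        have hAB_P : ¬A l ⊓ B b ≤ P := fun hle => by
          have := finrank_mono (le_inf inf_le_left hle : A l ⊓ B b ≤ A l ⊓ P)
          have := hAB l b
          omega
        have := hP'A l hAB_P
        have := hPA l
        omega

theorem Submodule.exists_linearIndependent_mem_of_monotone :
    ∀ {s : ℕ} (C : Fin s → Submodule K V), Monotone C →
      (∀ l : Fin s, (l : ℕ) + 1 ≤ finrank K (C l)) →
    ∃ y : Fin s → V, LinearIndependent K y ∧ ∀ l, y l ∈ C l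
  | 0, _, _, _ => ⟨Fin.elim0, linearIndependent_empty_type, fun l => l.elim0⟩
  | s + 1, C, hC, hdim => by
    obtain ⟨y, hy, hyC⟩ := exists_linearIndependent_mem_of_monotone (C ∘ Fin.castSucc)
      (hC.comp Fin.strictMono_castSucc.monotone) fun l => by simpa using hdim l.castSucc
    obtain ⟨x, hxC, hxy⟩ : ∃ x ∈ C (Fin.last s), x ∉ span K (Set.range y) := by
      refine SetLike.not_le_iff_exists.mp fun hle => ?_
      have := (finrank_mono hle).trans_eq (finrank_span_eq_card hy)
      have := hdim (Fin.last s)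
      simp only [Fintype.card_fin, Fin.val_last] at *
      omega
    refine ⟨Fin.snoc y x, linearIndependent_finSnoc.mpr ⟨hy, hxy⟩, Fin.lastCases ?_ fun l => ?_⟩
    · simpa using hxC
    · simpa using hyC l

end Flags

theorem StrictMono.val_add_sub_le {s r : ℕ} {j : Fin s → Fin r} (hj : StrictMono j) {m l : Fin s}
    (hml : m ≤ l) : (j m : ℕ) + (l - m) ≤ j l := by
  have hmaps : Set.MapsTo j (Icc m l) (Icc (j m) (j l)) := fun x hx =>
    mem_coe.2 (mem_Icc.2 ⟨hj.monotone (mem_Icc.1 hx).1, hj.monotone (mem_Icc.1 hx).2⟩)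
  have := card_le_card_of_injOn j hmaps hj.injective.injOn
  simp only [Fin.card_Icc] at this
  have : (j m : ℕ) ≤ j l := hj.monotone hml
  omega

theorem LinearIndependent.finrank_span_image {R M ι : Type*} [Ring R] [Nontrivial R]
    [StrongRankCondition R] [AddCommGroup M] [Module R M] {b : ι → M}
    (hb : LinearIndependent R b) (S : Set ι) [Fintype S] :
    finrank R (span R (b '' S)) = Fintype.card S := by
  rw [Set.image_eq_range]
  exact finrank_span_eq_card (hb.comp _ Subtype.val_injective)

section InnerProduct

variable {𝕜 V : Type*} [RCLike 𝕜] [NormedAddCommGroup V] [InnerProductSpace 𝕜 V]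

namespace OrthonormalBasis

variable {ι : Type*} [Fintype ι] (v : OrthonormalBasis ι 𝕜 V) {T : V →ₗ[𝕜] V} {μ : ι → ℝ}

theorem re_inner_map_self_eq_sum (hT : ∀ i, T (v i) = (μ i : 𝕜) • v i) (x : V) :
    re ⟪x, T x⟫_𝕜 = ∑ i, μ i * ‖⟪v i, x⟫_𝕜‖ ^ 2 := by
  have hTx : T x = ∑ i, ((μ i : 𝕜) * ⟪v i, x⟫_𝕜) • v i := by
    conv_lhs => rw [← v.sum_repr' x]
    simp [map_sum, hT, smul_smul, mul_comm]
  rw [hTx, inner_sum, map_sum]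
  refine sum_congr rfl fun i _ => ?_
  rw [inner_smul_right, ← inner_conj_symm x (v i), mul_assoc, RCLike.mul_conj]
  norm_cast

theorem inner_eq_zero_of_mem_span_image {S : Set ι} {x : V} (hx : x ∈ span 𝕜 (v '' S)) {i : ι}
    (hi : i ∉ S) : ⟪v i, x⟫_𝕜 = 0 := by
  have : span 𝕜 (v '' S) ≤ (𝕜 ∙ v i)ᗮ := span_le.2 <| by
    rintro _ ⟨k, hk, rfl⟩
    exact mem_orthogonal_singleton_iff_inner_right.2
      (v.orthonormal.2 (ne_of_mem_of_not_mem hk hi).symm)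
  exact mem_orthogonal_singleton_iff_inner_right.1 (this hx)

theorem re_inner_map_self_le_of_mem_span (hT : ∀ i, T (v i) = (μ i : 𝕜) • v i) {S : Set ι}
    {c : ℝ} (hc : ∀ i ∈ S, μ i ≤ c) {x : V} (hx : x ∈ span 𝕜 (v '' S)) :
    re ⟪x, T x⟫_𝕜 ≤ c * ‖x‖ ^ 2 := by
  rw [v.re_inner_map_self_eq_sum hT, ← v.sum_sq_norm_inner_right, mul_sum]
  refine sum_le_sum fun i _ => ?_
  by_cases hi : i ∈ S
  · exact mul_le_mul_of_nonneg_right (hc i hi) (sq_nonneg _)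
  · simp [v.inner_eq_zero_of_mem_span_image hx hi]

theorem le_re_inner_map_self_of_mem_span (hT : ∀ i, T (v i) = (μ i : 𝕜) • v i) {S : Set ι}
    {c : ℝ} (hc : ∀ i ∈ S, c ≤ μ i) {x : V} (hx : x ∈ span 𝕜 (v '' S)) :
    c * ‖x‖ ^ 2 ≤ re ⟪x, T x⟫_𝕜 := by
  rw [v.re_inner_map_self_eq_sum hT, ← v.sum_sq_norm_inner_right, mul_sum]
  refine sum_le_sum fun i _ => ?_
  by_cases hi : i ∈ S
  · exact mul_le_mul_of_nonneg_right (hc i hi) (sq_nonneg _)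
  · simp [v.inner_eq_zero_of_mem_span_image hx hi]

end OrthonormalBasis

variable [FiniteDimensional 𝕜 V]

noncomputable def compression (K : Submodule 𝕜 V) (T : V →ₗ[𝕜] V) : K →ₗ[𝕜] K :=
  K.orthogonalProjectionOnto.toLinearMap ∘ₗ T ∘ₗ K.subtype

theorem trace_compression_eq_sum_inner {K : Submodule 𝕜 V} {n : ℕ} (hK : finrank 𝕜 K = n)
    {u : Fin n → V} (hu : Orthonormal 𝕜 u) (huK : ∀ i, u i ∈ K) (T : V →ₗ[𝕜] V) :
    LinearMap.trace 𝕜 K (compression K T) = ∑ i, ⟪u i, T (u i)⟫_𝕜 := by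
  let u' : Fin n → K := fun i => ⟨u i, huK i⟩
  have hu' : Orthonormal 𝕜 u' := by
    rw [orthonormal_iff_ite] at hu ⊢
    exact hu
  have hspan : ⊤ ≤ span 𝕜 (Set.range u') :=
    (hu'.linearIndependent.span_eq_top_of_card_eq_finrank' (by simp [hK])).ge
  rw [LinearMap.trace_eq_sum_inner _ (OrthonormalBasis.mk hu' hspan)]
  refine sum_congr rfl fun i _ => ?_
  simp only [compression, OrthonormalBasis.coe_mk, LinearMap.coe_comp, Function.comp_apply,
    coe_subtype, ContinuousLinearMap.coe_coe, inner_orthogonalProjectionOnto_eq_of_mem_left, u']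

theorem exists_orthonormal_re_trace_compression_eq {s : ℕ} {K : Submodule 𝕜 V}
    (hK : finrank 𝕜 K = s) {C : Fin s → Submodule 𝕜 V} (hC : Monotone C)
    (hKC : ∀ l : Fin s, (l : ℕ) + 1 ≤ finrank 𝕜 (K ⊓ C l : Submodule 𝕜 V)) (T : V →ₗ[𝕜] V) :
    ∃ u : Fin s → V, Orthonormal 𝕜 u ∧ (∀ l, u l ∈ C l) ∧
      re (LinearMap.trace 𝕜 K (compression K T)) = ∑ l, re ⟪u l, T (u l)⟫_𝕜 := by
  obtain ⟨y, hy, hyKC⟩ := exists_linearIndependent_mem_of_monotone (fun l => K ⊓ C l)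
    (fun a b hab => inf_le_inf_left K (hC hab)) hKC
  have hu_mem : ∀ l, gramSchmidtNormed 𝕜 y l ∈ K ⊓ C l := fun l => by
    have : span 𝕜 (y '' Set.Iic l) ≤ K ⊓ C l := span_le.2 <| by
      rintro _ ⟨k, hk, rfl⟩
      exact inf_le_inf_left K (hC hk) (hyKC k)
    refine this ?_
    rw [← span_gramSchmidt_Iic 𝕜 y l, ← span_gramSchmidtNormed]
    exact subset_span ⟨l, Set.mem_Iic.2 le_rfl, rfl⟩
  refine ⟨gramSchmidtNormed 𝕜 y, gramSchmidtNormed_orthonormal hy, fun l => (hu_mem l).2, ?_⟩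
  rw [trace_compression_eq_sum_inner hK (gramSchmidtNormed_orthonormal hy)
    (fun l => (hu_mem l).1), map_sum]

theorem sum_le_re_trace_compression {s : ℕ} {K : Submodule 𝕜 V} (hK : finrank 𝕜 K = s)
    {C : Fin s → Submodule 𝕜 V} (hC : Monotone C)
    (hKC : ∀ l : Fin s, (l : ℕ) + 1 ≤ finrank 𝕜 (K ⊓ C l : Submodule 𝕜 V)) {T : V →ₗ[𝕜] V}
    {c : Fin s → ℝ} (hc : ∀ l, ∀ x ∈ C l, c l * ‖x‖ ^ 2 ≤ re ⟪x, T x⟫_𝕜) :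
    ∑ l, c l ≤ re (LinearMap.trace 𝕜 K (compression K T)) := by
  obtain ⟨u, hu, huC, htr⟩ := exists_orthonormal_re_trace_compression_eq hK hC hKC T
  rw [htr]
  exact sum_le_sum fun l _ => by simpa [hu.1 l] using hc l (u l) (huC l)

theorem re_trace_compression_le_sum {s : ℕ} {K : Submodule 𝕜 V} (hK : finrank 𝕜 K = s)
    {C : Fin s → Submodule 𝕜 V} (hC : Monotone C)
    (hKC : ∀ l : Fin s, (l : ℕ) + 1 ≤ finrank 𝕜 (K ⊓ C l : Submodule 𝕜 V)) {T : V →ₗ[𝕜] V}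
    {c : Fin s → ℝ} (hc : ∀ l, ∀ x ∈ C l, re ⟪x, T x⟫_𝕜 ≤ c l * ‖x‖ ^ 2) :
    re (LinearMap.trace 𝕜 K (compression K T)) ≤ ∑ l, c l := by
  obtain ⟨u, hu, huC, htr⟩ := exists_orthonormal_re_trace_compression_eq hK hC hKC T
  rw [htr]
  exact sum_le_sum fun l _ => by simpa [hu.1 l] using hc l (u l) (huC l)

end InnerProduct

namespace OrthonormalBasis

variable {𝕜 V : Type*} [RCLike 𝕜] [NormedAddCommGroup V] [InnerProductSpace 𝕜 V]
  [FiniteDimensional 𝕜 V] {r : ℕ} (v : OrthonormalBasis (Fin r) 𝕜 V) {T : V →ₗ[𝕜] V}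
  {μ : Fin r → ℝ} {s : ℕ} {j : Fin s → Fin r}

theorem exists_flag_sum_le_re_trace_compression (hT : ∀ i, T (v i) = (μ i : 𝕜) • v i)
    (hμ : Antitone μ) (hj : StrictMono j) :
    ∃ F : Fin s → Submodule 𝕜 V, Monotone F ∧ (∀ l, finrank 𝕜 (F l) = (j l : ℕ) + 1) ∧
      ∀ E : Submodule 𝕜 V, finrank 𝕜 E = s →
        (∀ l : Fin s, (l : ℕ) + 1 ≤ finrank 𝕜 (E ⊓ F l : Submodule 𝕜 V)) →
        ∑ l, μ (j l) ≤ re (LinearMap.trace 𝕜 E (compression E T)) := by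
  let F : Fin s → Submodule 𝕜 V := fun l => span 𝕜 (v '' Set.Iic (j l))
  have hF : Monotone F := fun a b hab =>
    span_mono (Set.image_mono (Set.Iic_subset_Iic.2 (hj.monotone hab)))
  refine ⟨F, hF, fun l => ?_, fun E hE hEF => ?_⟩
  · rw [v.orthonormal.linearIndependent.finrank_span_image, Fintype.card_Iic, Fin.card_Iic]
  · exact sum_le_re_trace_compression hE hF hEF fun l x hx =>
      v.le_re_inner_map_self_of_mem_span hT (fun i hi => hμ hi) hx

theorem exists_subspace_re_trace_compression_le_sum (hT : ∀ i, T (v i) = (μ i : 𝕜) • v i)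
    (hμ : Antitone μ) (hj : StrictMono j) {F : Fin s → Submodule 𝕜 V} (hF : Monotone F)
    (hF_rank : ∀ l, finrank 𝕜 (F l) = (j l : ℕ) + 1) :
    ∃ E : Submodule 𝕜 V, finrank 𝕜 E = s ∧
      (∀ l : Fin s, (l : ℕ) + 1 ≤ finrank 𝕜 (E ⊓ F l : Submodule 𝕜 V)) ∧
      re (LinearMap.trace 𝕜 E (compression E T)) ≤ ∑ l, μ (j l) := by
  let G : Fin s → Submodule 𝕜 V := fun t => span 𝕜 (v '' Set.Ici (j t.rev))
  have hG : Monotone G := fun a b hab =>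
    span_mono (Set.image_mono (Set.Ici_subset_Ici.2 (hj.monotone (Fin.rev_le_rev.2 hab))))
  have hFG : ∀ l t : Fin s, (l : ℕ) + t + 2 ≤ s + finrank 𝕜 (F l ⊓ G t : Submodule 𝕜 V) := by
    intro l t
    have hG_rank : finrank 𝕜 (G t) = r - j t.rev := by
      rw [v.orthonormal.linearIndependent.finrank_span_image, Fintype.card_Ici, Fin.card_Ici]
    have hsum := Submodule.finrank_sup_add_finrank_inf_eq (F l) (G t)
    have hV : finrank 𝕜 V = r := (finrank_eq_card_basis v.toBasis).trans (Fintype.card_fin r)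
    have hsup := (F l ⊔ G t).finrank_le
    have hrev : (t.rev : ℕ) = s - (t + 1) := Fin.val_rev t
    have hjr := (j t.rev).2
    rw [hF_rank, hG_rank] at hsum
    by_cases hl : t.rev ≤ l
    · have := hj.val_add_sub_le hl
      omega
    · have : (l : ℕ) < t.rev := not_le.mp hl
      omega
  obtain ⟨E, hE, hEF, hEG⟩ := exists_subspace_meeting_two_flags hF hG hFG
  refine ⟨E, hE, hEF, ?_⟩
  calc re (LinearMap.trace 𝕜 E (compression E T)) ≤ ∑ t : Fin s, μ (j t.rev) :=
        re_trace_compression_le_sum hE hG hEG fun t x hx =>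
          v.re_inner_map_self_le_of_mem_span hT (fun i hi => hμ hi) hx
    _ = ∑ l, μ (j l) := Fintype.sum_equiv Fin.revPerm _ _ fun _ => rfl

end OrthonormalBasis

/-- For a Hermitian `r × r` matrix `H` with eigenvalues `μ 0 ≥ … ≥ μ (r-1)` in
nonincreasing order and `J = {j 0 < … < j (s-1)} ⊆ {1, …, r}`, the sum
`Σ_{l} μ (j l)` equals the maximum over partial flags `F₁ ⊂ … ⊂ F_s` with
`dim F_l = j_l` of the minimum over `s`-dimensional subspaces `E` with
`dim (E ⊓ F_l) ≥ l` of `Tr (H_E)`. -/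
theorem partial_eigenvalue_sum_max_min (r s : ℕ) (H : Matrix (Fin r) (Fin r) ℂ)
    (hH : H.IsHermitian) (μ : Fin r → ℝ) (hmono : Antitone μ)
    (hperm : ∃ σ : Equiv.Perm (Fin r), ∀ i, μ i = hH.eigenvalues (σ i))
    (j : Fin s → Fin r) (hj : StrictMono j) :
    (∃ F : Fin s → Submodule ℂ (EuclideanSpace ℂ (Fin r)),
        Monotone F ∧ (∀ l, Module.finrank ℂ (F l) = (j l : ℕ) + 1) ∧
        ∀ E : Submodule ℂ (EuclideanSpace ℂ (Fin r)),
          Module.finrank ℂ E = s →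
          (∀ l : Fin s, (l : ℕ) + 1 ≤ Module.finrank ℂ (E ⊓ F l : Submodule ℂ _)) →
          (∑ l, μ (j l)) ≤ compressionTrace r H E) ∧
    (∀ F : Fin s → Submodule ℂ (EuclideanSpace ℂ (Fin r)),
        Monotone F → (∀ l, Module.finrank ℂ (F l) = (j l : ℕ) + 1) →
        ∃ E : Submodule ℂ (EuclideanSpace ℂ (Fin r)),
          Module.finrank ℂ E = s ∧
          (∀ l : Fin s, (l : ℕ) + 1 ≤ Module.finrank ℂ (E ⊓ F l : Submodule ℂ _)) ∧
          compressionTrace r H E ≤ ∑ l, μ (j l)) := by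
  obtain ⟨σ, hσ⟩ := hperm
  let v := hH.eigenvectorBasis.reindex σ.symm
  have hT : ∀ i, Matrix.toEuclideanLin H (v i) = (μ i : ℂ) • v i := fun i => by
    ext k
    simp [v, hσ, Matrix.toLpLin_apply, hH.mulVec_eigenvectorBasis]
  exact ⟨v.exists_flag_sum_le_re_trace_compression hT hmono hj,
    fun F hF hF_rank => v.exists_subspace_re_trace_compression_le_sum hT hmono hj hF hF_rank⟩
end

section
/- Let V be a finite-dimensional complex inner product space, T : V → V a self-adjoint linear operator, and v ∈ V a nonzero vector. Then the function ψ : ℝ → ℝ, ψ(t) = log ‖exp(tT) v‖, is convex. -/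
/-!
Put `u t = exp (t T) v`, so that `u' = T u`. Then `(‖u‖²)' = 2 re ⟪T u, u⟫` and, `T` being
self-adjoint, `(‖u‖²)'' = 4 ‖T u‖²`. A positive function `f` has convex logarithm as soon as
`f'² ≤ f f''`, which here is the Cauchy–Schwarz inequality `|⟪T u, u⟫| ≤ ‖T u‖ ‖u‖`; finally
`log ‖u‖ = log (‖u‖²) / 2`.
-/

open Real Set RCLike NormedSpace
open scoped InnerProductSpace

theorem convexOn_univ_log_of_sq_deriv_le {f f' f'' : ℝ → ℝ} (hf : ∀ t, 0 < f t)
    (hf' : ∀ t, HasDerivAt f (f' t) t) (hf'' : ∀ t, HasDerivAt f' (f'' t) t)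
    (h : ∀ t, f' t ^ 2 ≤ f t * f'' t) : ConvexOn ℝ univ (fun t => log (f t)) := by
  have hlog : ∀ t, HasDerivAt (fun s => log (f s)) (f' t / f t) t :=
    fun t => (hf' t).log (hf t).ne'
  have hlog' : ∀ t, HasDerivAt (fun s => f' s / f s) ((f'' t * f t - f' t * f' t) / f t ^ 2) t :=
    fun t => (hf'' t).div (hf' t) (hf t).ne'
  have hderiv : deriv (fun s => log (f s)) = fun s => f' s / f s := funext fun t => (hlog t).deriv
  refine convexOn_univ_of_deriv2_nonneg (fun t => (hlog t).differentiableAt)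
    (hderiv ▸ fun t => (hlog' t).differentiableAt) fun t => ?_
  rw [Function.iterate_succ_apply, Function.iterate_one, hderiv, (hlog' t).deriv]
  exact div_nonneg (by nlinarith [h t]) (sq_nonneg _)

section SymmetricFlow

variable {𝕜 E : Type*} [RCLike 𝕜] [NormedAddCommGroup E] [InnerProductSpace 𝕜 E] [NormedSpace ℝ E]
  [IsScalarTower ℝ 𝕜 E]

theorem HasDerivAt.re_inner_apply_self {B : E →L[𝕜] E} (hB : (B : E →ₗ[𝕜] E).IsSymmetric)
    {u : ℝ → E} {u' : E} {t : ℝ} (hu : HasDerivAt u u' t) :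
    HasDerivAt (fun s => re ⟪B (u s), u s⟫_𝕜) (2 * re ⟪B (u t), u'⟫_𝕜) t := by
  have hBu : HasDerivAt (fun s => B (u s)) (B u') t :=
    (B.restrictScalars ℝ).hasFDerivAt.comp_hasDerivAt t hu
  have := (reCLM (K := 𝕜)).hasFDerivAt.comp_hasDerivAt t (hBu.inner 𝕜 hu)
  have hsymm : ⟪B u', u t⟫_𝕜 = ⟪u', B (u t)⟫_𝕜 := hB u' (u t)
  refine this.congr_deriv ?_
  rw [reCLM_apply, map_add, hsymm, inner_re_symm u']
  ring

theorem convexOn_univ_log_norm_of_hasDerivAt_isSymmetric {A : E →L[𝕜] E}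
    (hA : (A : E →ₗ[𝕜] E).IsSymmetric) {u : ℝ → E} (hu : ∀ t, HasDerivAt u (A (u t)) t)
    (hu0 : ∀ t, u t ≠ 0) : ConvexOn ℝ univ (fun t => log ‖u t‖) := by
  have hnormSq : ∀ t, HasDerivAt (fun s => ‖u s‖ ^ 2) (2 * re ⟪A (u t), u t⟫_𝕜) t := by
    intro t
    have := (hu t).re_inner_apply_self (B := ContinuousLinearMap.id 𝕜 E)
      LinearMap.IsSymmetric.id
    simp only [ContinuousLinearMap.id_apply, inner_self_eq_norm_sq] at this
    rwa [inner_re_symm] at this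
  have hsq : ConvexOn ℝ univ (fun t => log (‖u t‖ ^ 2)) := by
    refine convexOn_univ_log_of_sq_deriv_le (fun t => pow_pos (norm_pos_iff.2 (hu0 t)) 2) hnormSq
      (fun t => ((hu t).re_inner_apply_self hA).const_mul 2) fun t => ?_
    have hCS : |re ⟪A (u t), u t⟫_𝕜| ≤ ‖A (u t)‖ * ‖u t‖ :=
      (abs_re_le_norm _).trans (norm_inner_le_norm _ _)
    rw [inner_self_eq_norm_sq]
    nlinarith [sq_abs (re ⟪A (u t), u t⟫_𝕜), abs_nonneg (re ⟪A (u t), u t⟫_𝕜)]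
  refine (hsq.smul (by norm_num : (0 : ℝ) ≤ 1 / 2)).congr fun t _ => ?_
  simp only [smul_eq_mul, log_pow]
  push_cast
  ring

end SymmetricFlow

theorem exp_apply_ne_zero {𝕜 E : Type*} [RCLike 𝕜] [NormedAddCommGroup E] [NormedSpace 𝕜 E]
    [CompleteSpace E] (T : E →L[𝕜] E) {v : E} (hv : v ≠ 0) : exp T v ≠ 0 := by
  have hunit : IsUnit (exp T) := isUnit_exp_of_mem_ball (𝕂 := 𝕜) <|
    (expSeries_radius_eq_top 𝕜 (E →L[𝕜] E)).symm ▸ edist_lt_top _ _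
  exact (ContinuousLinearMap.isUnit_iff_bijective.1 hunit).injective.ne hv |>.trans_eq (map_zero _)

theorem hasDerivAt_exp_ofReal_smul_apply {E : Type*} [NormedAddCommGroup E] [NormedSpace ℂ E]
    [CompleteSpace E] (T : E →L[ℂ] E) (v : E) (t : ℝ) :
    HasDerivAt (fun s : ℝ => exp ((s : ℂ) • T) v) (T (exp ((t : ℂ) • T) v)) t := by
  simp_rw [Complex.coe_smul]
  exact (ContinuousLinearMap.apply ℂ E v |>.restrictScalars ℝ).hasFDerivAt.comp_hasDerivAt t
    (hasDerivAt_exp_smul_const' T t)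

/-- **Convexity of the Kempf–Ness function along a one-parameter subgroup.**
For a self-adjoint operator `T` on a finite-dimensional complex inner product
space and a nonzero vector `v`, the function `t ↦ log ‖exp(tT) v‖` is convex. -/
theorem kempfNess_convex (V : Type*) [NormedAddCommGroup V] [InnerProductSpace ℂ V]
    [FiniteDimensional ℂ V] (T : V →L[ℂ] V) (hT : IsSelfAdjoint T)
    (v : V) (hv : v ≠ 0) :
    ConvexOn ℝ Set.univ (fun t : ℝ => Real.log ‖NormedSpace.exp ((t : ℂ) • T) v‖) :=
  convexOn_univ_log_norm_of_hasDerivAt_isSymmetric hT.isSymmetric (hasDerivAt_exp_ofReal_smul_apply T v)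
    fun _ => exp_apply_ne_zero _ hv
end

section
/- Let V be a finite-dimensional complex inner product space, T : V → V a self-adjoint linear operator, and v ∈ V a nonzero vector. Then 0 lies in the closure of the orbit {exp(tT) v : t ∈ ℝ} if and only if v lies in the sum of the eigenspaces of T with strictly positive eigenvalues, or v lies in the sum of the eigenspaces of T with strictly negative eigenvalues. -/
/-!
Decompose `v = ∑ v_μ` along the eigenspaces of `T`, whose eigenvalues `μ` are real; then
`exp (t T) v = ∑ e^{tμ} v_μ` is an orthogonal sum. If every `μ` in the support has the same strict
sign, letting `t → ∓∞` drives the orbit to `0`. Conversely, orthogonality gives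
`e^{tμ} ‖v_μ‖ ≤ ‖exp (t T) v‖`, so an orbit point closer to `0` than every `‖v_μ‖` has `t μ < 0`
for all `μ` in the support: all these `μ` have the sign opposite to that of `t`.
-/

open Filter Topology Module.End NormedSpace

section ExpEigenvector

variable {𝕜 E : Type*} [RCLike 𝕜] [NormedAddCommGroup E] [NormedSpace 𝕜 E] [CompleteSpace E]

theorem NormedSpace.exp_apply_of_mem_eigenspace {A : E →L[𝕜] E} {c : 𝕜} {w : E}
    (hw : w ∈ eigenspace (A : E →ₗ[𝕜] E) c) : exp A w = exp c • w := by
  have hpow (n : ℕ) : (A ^ n) w = c ^ n • w := by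
    induction n with
    | zero => simp
    | succ n ih =>
      rw [pow_succ', mul_apply_eq_comp, ih, map_smul,
        show A w = c • w from mem_eigenspace_iff.mp hw, smul_smul, pow_succ]
  have hA := (exp_series_hasSum_exp' (𝕂 := 𝕜) A).mapL (ContinuousLinearMap.apply 𝕜 E w)
  have hc := (exp_series_hasSum_exp' (𝕂 := 𝕜) c).smul_const w
  refine hA.unique (hc.congr_fun fun n => ?_)
  simp [hpow, smul_smul]

theorem NormedSpace.exp_ofReal_smul_apply_of_mem_eigenspace {A : E →L[𝕜] E} {μ : ℝ} {w : E}
    (hw : w ∈ eigenspace (A : E →ₗ[𝕜] E) (μ : 𝕜)) (t : ℝ) :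
    exp ((t : 𝕜) • A) w = (Real.exp (t * μ) : 𝕜) • w := by
  have hw' : w ∈ eigenspace (((t : 𝕜) • A : E →L[𝕜] E) : E →ₗ[𝕜] E) ((t * μ : ℝ) : 𝕜) := by
    rw [mem_eigenspace_iff] at hw ⊢
    simp [hw, smul_smul]
  rw [exp_apply_of_mem_eigenspace hw', ← RCLike.algebraMap_eq_ofReal, ← algebraMap_exp_comm,
    ← Real.exp_eq_exp_ℝ]

end ExpEigenvector

section Decay

variable {α R M N : Type*} [Semiring R] [AddCommMonoid M] [Module R M] [AddCommMonoid N]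
  [Module R N] [TopologicalSpace N] [ContinuousAdd N] [ContinuousConstSMul R N]

def LinearMap.tendstoZeroSubmodule (g : α → M →ₗ[R] N) (l : Filter α) : Submodule R M where
  carrier := {x | Tendsto (fun a => g a x) l (𝓝 0)}
  zero_mem' := by simpa using tendsto_const_nhds
  add_mem' hx hy := by simpa using hx.add hy
  smul_mem' c _ hx := by simpa using hx.const_smul c

@[simp]
theorem LinearMap.mem_tendstoZeroSubmodule {g : α → M →ₗ[R] N} {l : Filter α} {x : M} :
    x ∈ tendstoZeroSubmodule g l ↔ Tendsto (fun a => g a x) l (𝓝 0) :=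
  Iff.rfl

end Decay

theorem Submodule.finsupp_sum_mem_iSup₂ {ι R M : Type*} [Semiring R] [AddCommMonoid M]
    [Module R M] {p : ι → Prop} {G : ι → Submodule R M} (f : ι →₀ M) (hf : ∀ i, f i ∈ G i)
    (hp : ∀ i ∈ f.support, p i) : (f.sum fun _ x => x) ∈ ⨆ (i) (_ : p i), G i :=
  sum_mem fun i hi => mem_iSup_of_mem i <| mem_iSup_of_mem (hp i hi) (hf i)

theorem OrthogonalFamily.norm_le_norm_sum {ι 𝕜 E : Type*} [RCLike 𝕜] [NormedAddCommGroup E]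
    [InnerProductSpace 𝕜 E] {G : ι → Submodule 𝕜 E}
    (hG : OrthogonalFamily 𝕜 (fun i => G i) fun i => (G i).subtypeₗᵢ) {w : ι → E}
    (hw : ∀ i, w i ∈ G i) {s : Finset ι} {i : ι} (hi : i ∈ s) : ‖w i‖ ≤ ‖∑ j ∈ s, w j‖ := by
  have hsum := hG.norm_sum (fun j => ⟨w j, hw j⟩) s
  refine (sq_le_sq₀ (norm_nonneg _) (norm_nonneg _)).mp ?_
  calc ‖w i‖ ^ 2 ≤ ∑ j ∈ s, ‖w j‖ ^ 2 :=
        Finset.single_le_sum (f := fun j => ‖w j‖ ^ 2) (fun _ _ => sq_nonneg _) hi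
    _ = ‖∑ j ∈ s, w j‖ ^ 2 := hsum.symm

section Symmetric

variable {𝕜 E : Type*} [RCLike 𝕜] [NormedAddCommGroup E] [InnerProductSpace 𝕜 E]

namespace LinearMap.IsSymmetric

variable {T : E →ₗ[𝕜] E}

theorem iSup_eigenspace_ofReal_eq_top [FiniteDimensional 𝕜 E] (hT : T.IsSymmetric) :
    ⨆ μ : ℝ, eigenspace T (μ : 𝕜) = ⊤ := by
  rw [eq_top_iff,
    ← Submodule.orthogonal_eq_bot_iff.mp hT.orthogonalComplement_iSup_eigenspaces_eq_bot]
  refine iSup_le fun μ => ?_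
  by_cases hμ : HasEigenvalue T μ
  · rw [← RCLike.conj_eq_iff_re.mp (hT.conj_eigenvalue_eq_self hμ)]
    exact le_iSup (fun r : ℝ => eigenspace T (r : 𝕜)) (RCLike.re μ)
  · rw [hasEigenvalue_iff, not_not] at hμ
    rw [hμ]
    exact bot_le

theorem orthogonalFamily_eigenspaces_ofReal (hT : T.IsSymmetric) :
    OrthogonalFamily 𝕜 (fun μ : ℝ => eigenspace T (μ : 𝕜))
      fun μ => (eigenspace T (μ : 𝕜)).subtypeₗᵢ :=
  hT.orthogonalFamily_eigenspaces.comp RCLike.ofReal_injective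

end LinearMap.IsSymmetric

variable [CompleteSpace E] {A : E →L[𝕜] E}

theorem exp_mul_norm_le_norm_exp_smul_apply (hA : (A : E →ₗ[𝕜] E).IsSymmetric) {f : ℝ →₀ E}
    (hf : ∀ μ : ℝ, f μ ∈ eigenspace (A : E →ₗ[𝕜] E) (μ : 𝕜)) (t μ : ℝ) :
    Real.exp (t * μ) * ‖f μ‖ ≤ ‖exp ((t : 𝕜) • A) (f.sum fun _ x => x)‖ := by
  by_cases hμ : μ ∈ f.support
  · have hexp : exp ((t : 𝕜) • A) (f.sum fun _ x => x)
        = ∑ ν ∈ f.support, (Real.exp (t * ν) : 𝕜) • f ν := by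
      rw [Finsupp.sum, map_sum]
      exact Finset.sum_congr rfl fun ν _ =>
        exp_ofReal_smul_apply_of_mem_eigenspace (hf ν) t
    rw [hexp]
    convert hA.orthogonalFamily_eigenspaces_ofReal.norm_le_norm_sum
      (w := fun ν => (Real.exp (t * ν) : 𝕜) • f ν) (fun ν => Submodule.smul_mem _ _ (hf ν)) hμ
      using 1
    rw [norm_smul, RCLike.norm_ofReal, abs_of_pos (Real.exp_pos _)]
  · simp [Finsupp.notMem_support_iff.mp hμ]

theorem exists_forall_mul_neg_of_zero_mem_closure (hA : (A : E →ₗ[𝕜] E).IsSymmetric)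
    {f : ℝ →₀ E} (hf : ∀ μ : ℝ, f μ ∈ eigenspace (A : E →ₗ[𝕜] E) (μ : 𝕜))
    (h0 : (0 : E) ∈ closure {x | ∃ t : ℝ, x = exp ((t : 𝕜) • A) (f.sum fun _ x => x)}) :
    ∃ t : ℝ, ∀ μ ∈ f.support, t * μ < 0 := by
  have hnhds : {x : E | ∀ μ ∈ f.support, ‖x‖ < ‖f μ‖} ∈ 𝓝 0 :=
    (Finset.eventually_all f.support).2 fun μ hμ =>
      (continuous_norm.tendsto' 0 0 norm_zero).eventually_lt_const
        (norm_pos_iff.2 (Finsupp.mem_support_iff.1 hμ))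
  obtain ⟨_, hsmall, t, rfl⟩ := mem_closure_iff_nhds.1 h0 _ hnhds
  refine ⟨t, fun μ hμ => Real.exp_lt_one_iff.1 ?_⟩
  have hfμ : 0 < ‖f μ‖ := norm_pos_iff.2 (Finsupp.mem_support_iff.1 hμ)
  refine (mul_lt_iff_lt_one_left hfμ).1 ?_
  exact (exp_mul_norm_le_norm_exp_smul_apply hA hf t μ).trans_lt (hsmall μ hμ)

end Symmetric

theorem tendsto_exp_smul_apply_zero {𝕜 E : Type*} [RCLike 𝕜] [NormedAddCommGroup E]
    [NormedSpace 𝕜 E] [CompleteSpace E] {A : E →L[𝕜] E} {l : Filter ℝ} {p : ℝ → Prop}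
    (hp : ∀ μ, p μ → Tendsto (· * μ) l atBot) {v : E}
    (hv : v ∈ ⨆ (μ : ℝ) (_ : p μ), eigenspace (A : E →ₗ[𝕜] E) (μ : 𝕜)) :
    Tendsto (fun t : ℝ => exp ((t : 𝕜) • A) v) l (𝓝 0) := by
  suffices h : ⨆ (μ : ℝ) (_ : p μ), eigenspace (A : E →ₗ[𝕜] E) (μ : 𝕜) ≤
      LinearMap.tendstoZeroSubmodule
        (fun t : ℝ => ((exp ((t : 𝕜) • A) : E →L[𝕜] E) : E →ₗ[𝕜] E)) l from h hv
  refine iSup₂_le fun μ hμ w hw => ?_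
  rw [LinearMap.mem_tendstoZeroSubmodule]
  simp only [ContinuousLinearMap.coe_coe, exp_ofReal_smul_apply_of_mem_eigenspace hw]
  simpa using (((RCLike.continuous_ofReal (K := 𝕜)).tendsto' 0 0 RCLike.ofReal_zero).comp
    (Real.tendsto_exp_atBot.comp (hp μ hμ))).smul_const w

theorem zero_in_orbit_closure_iff_general (V : Type*) [NormedAddCommGroup V] [InnerProductSpace ℂ V]
    [FiniteDimensional ℂ V] (T : V →L[ℂ] V) (hT : IsSelfAdjoint T)
    (v : V) :
    (0 : V) ∈ closure {x : V | ∃ t : ℝ, x = NormedSpace.exp ((t : ℂ) • T) v} ↔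
      (v ∈ ⨆ (μ : ℝ) (_ : 0 < μ), Module.End.eigenspace (T : V →ₗ[ℂ] V) (μ : ℂ)) ∨
      (v ∈ ⨆ (μ : ℝ) (_ : μ < 0), Module.End.eigenspace (T : V →ₗ[ℂ] V) (μ : ℂ)) := by
  have hS := hT.isSymmetric
  constructor
  · intro h0
    obtain ⟨f, hf, rfl⟩ := (Submodule.mem_iSup_iff_exists_finsupp _ v).1
      (hS.iSup_eigenspace_ofReal_eq_top ▸ Submodule.mem_top)
    obtain ⟨t, ht⟩ := exists_forall_mul_neg_of_zero_mem_closure hS hf h0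
    rcases le_or_gt t 0 with ht0 | ht0
    · exact .inl <| Submodule.finsupp_sum_mem_iSup₂ f hf fun μ hμ =>
        pos_of_mul_neg_right (ht μ hμ) ht0
    · exact .inr <| Submodule.finsupp_sum_mem_iSup₂ f hf fun μ hμ =>
        neg_of_mul_neg_right (ht μ hμ) ht0.le
  · have horbit (l : Filter ℝ) [l.NeBot]
        (h : Tendsto (fun t : ℝ => exp ((t : ℂ) • T) v) l (𝓝 0)) :
        (0 : V) ∈ closure {x : V | ∃ t : ℝ, x = exp ((t : ℂ) • T) v} :=
      mem_closure_of_tendsto h (Eventually.of_forall fun t => ⟨t, rfl⟩)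
    rintro (hpos | hneg)
    · exact horbit atBot <| tendsto_exp_smul_apply_zero
        (fun μ hμ => tendsto_id.atBot_mul_const hμ) hpos
    · exact horbit atTop <| tendsto_exp_smul_apply_zero
        (fun μ hμ => tendsto_id.atTop_mul_const_of_neg hμ) hneg

/-- **One-parameter instability criterion.** For a self-adjoint operator `T` on
a finite-dimensional complex inner product space and nonzero `v`, `0` lies in
the closure of the orbit `{exp(tT) v : t ∈ ℝ}` if and only if `v` lies in the
sum of the eigenspaces of `T` with strictly positive eigenvalues, or in the sum
of the eigenspaces with strictly negative eigenvalues. -/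
theorem zero_in_orbit_closure_iff (V : Type*) [NormedAddCommGroup V] [InnerProductSpace ℂ V]
    [FiniteDimensional ℂ V] (T : V →L[ℂ] V) (hT : IsSelfAdjoint T)
    (v : V) (hv : v ≠ 0) :
    (0 : V) ∈ closure {x : V | ∃ t : ℝ, x = NormedSpace.exp ((t : ℂ) • T) v} ↔
      (v ∈ ⨆ (μ : ℝ) (_ : 0 < μ), Module.End.eigenspace (T : V →ₗ[ℂ] V) (μ : ℂ)) ∨
      (v ∈ ⨆ (μ : ℝ) (_ : μ < 0), Module.End.eigenspace (T : V →ₗ[ℂ] V) (μ : ℂ)) :=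
  zero_in_orbit_closure_iff_general V T hT v
end

section
/- Let V be a finite-dimensional complex inner product space, T : V → V a self-adjoint linear operator, and v ∈ V a nonzero vector. Then the function t ↦ ‖exp(tT) v‖ attains a global minimum on ℝ if and only if the orbit {exp(tT) v : t ∈ ℝ} is a closed subset of V. -/
/-!
Diagonalising `T` in an orthonormal eigenbasis turns the orbit of `v` into the curve
`t ↦ (e^{t λᵢ} cᵢ)ᵢ`, where `cᵢ` are the coordinates of `v`. If some `cᵢ ≠ 0` have eigenvalues
of both signs, the norm of the curve tends to `∞` in both directions: it attains its minimum and
the orbit map is proper, so its image is closed. If all those eigenvalues are `≥ 0` and one is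
positive, the norm is strictly increasing, so there is no minimum, and as `t → -∞` the curve
converges to the kernel component of `v`, a point of the closure whose norm lies strictly below
that of every orbit point. The case `≤ 0` follows by reversing time, and if all vanish the orbit
is a single point.
-/

open Filter Topology Set

theorem isClosed_range_of_tendsto_norm_cocompact {X E : Type*} [TopologicalSpace X]
    [NormedAddCommGroup E] [ProperSpace E] {f : X → E} (hf : Continuous f)
    (h : Tendsto (‖f ·‖) (cocompact X) atTop) : IsClosed (range f) := by
  rw [tendsto_norm_atTop_iff_cobounded, Metric.cobounded_eq_cocompact] at h
  exact (isProperMap_iff_tendsto_cocompact.2 ⟨hf, h⟩).isClosed_range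

theorem not_isClosed_range_of_strictMono_norm {α E : Type*} [LinearOrder α] [Nonempty α]
    [NoMinOrder α] [SeminormedAddCommGroup E] {f : α → E} {w : E} (hf : StrictMono (‖f ·‖))
    (hw : Tendsto f atBot (𝓝 w)) : ¬ IsClosed (range f) := by
  intro hclosed
  obtain ⟨s, rfl⟩ := hclosed.mem_of_tendsto hw (.of_forall mem_range_self)
  obtain ⟨s', hs'⟩ := exists_lt s
  have hle : ‖f s‖ ≤ ‖f s'‖ :=
    le_of_tendsto hw.norm ((eventually_le_atBot s').mono fun t ht => hf.monotone ht)
  exact (hf hs').not_ge hle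

theorem NormedSpace.exp_apply_of_apply_eq_smul {𝕂 E : Type*} [RCLike 𝕂] [NormedAddCommGroup E]
    [NormedSpace 𝕂 E] [CompleteSpace E] {A : E →L[𝕂] E} {x : E} {μ : 𝕂} (hx : A x = μ • x) :
    NormedSpace.exp A x = NormedSpace.exp μ • x := by
  have hpow (n : ℕ) : (A ^ n) x = μ ^ n • x := by
    induction n with
    | zero => simp
    | succ n ih => simp [pow_succ, ih, hx, smul_smul, mul_comm]
  refine HasSum.unique ?_ ((NormedSpace.exp_series_hasSum_exp' (𝕂 := 𝕂) μ).smul_const x)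
  simpa [hpow, smul_smul] using
    (NormedSpace.exp_series_hasSum_exp' (𝕂 := 𝕂) A).mapL (ContinuousLinearMap.apply 𝕂 E x)

section ExpDiagonalCurve

variable {𝕜 ι : Type*} [RCLike 𝕜]

noncomputable def expDiagonalCurve (μ : ι → ℝ) (c : EuclideanSpace 𝕜 ι) (t : ℝ) :
    EuclideanSpace 𝕜 ι :=
  WithLp.toLp 2 fun i => Real.exp (t * μ i) • c i

variable (μ : ι → ℝ) (c : EuclideanSpace 𝕜 ι)

@[simp]
theorem expDiagonalCurve_apply (t : ℝ) (i : ι) :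
    expDiagonalCurve μ c t i = Real.exp (t * μ i) • c i := rfl

theorem expDiagonalCurve_neg : expDiagonalCurve (-μ) c = expDiagonalCurve μ c ∘ Neg.neg := by
  ext t i
  simp

theorem continuous_expDiagonalCurve : Continuous (expDiagonalCurve μ c) :=
  (PiLp.continuous_toLp 2 _).comp (continuous_pi fun _ => by fun_prop)

theorem expDiagonalCurve_eq_self (h : ∀ i, c i ≠ 0 → μ i = 0) (t : ℝ) :
    expDiagonalCurve μ c t = c := by
  ext i
  by_cases hci : c i = 0
  · simp [hci]
  · simp [h i hci]

theorem tendsto_expDiagonalCurve_atBot (hμ : ∀ i, c i ≠ 0 → 0 ≤ μ i) :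
    ∃ w, Tendsto (expDiagonalCurve μ c) atBot (𝓝 w) := by
  suffices ∀ i, ∃ a, Tendsto (fun t => Real.exp (t * μ i) • c i) atBot (𝓝 a) by
    choose w hw using this
    exact ⟨WithLp.toLp 2 w, ((PiLp.continuous_toLp 2 _).tendsto _).comp (tendsto_pi_nhds.2 hw)⟩
  intro i
  by_cases hci : c i = 0
  · exact ⟨0, by simp [hci]⟩
  rcases (hμ i hci).eq_or_lt with h | h
  · exact ⟨c i, by simp [← h]⟩
  · exact ⟨0, by simpa using
      (Real.tendsto_exp_atBot.comp (tendsto_id.atBot_mul_const h)).smul_const (c i)⟩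

variable [Fintype ι]

theorem norm_expDiagonalCurve_sq (t : ℝ) :
    ‖expDiagonalCurve μ c t‖ ^ 2 = ∑ i, (Real.exp (t * μ i) * ‖c i‖) ^ 2 := by
  simp [EuclideanSpace.norm_sq_eq, norm_smul]

theorem tendsto_norm_expDiagonalCurve_atTop {i : ι} (hci : c i ≠ 0) (hμ : 0 < μ i) :
    Tendsto (‖expDiagonalCurve μ c ·‖) atTop atTop := by
  refine tendsto_atTop_mono (fun t => PiLp.norm_apply_le (expDiagonalCurve μ c t) i) ?_
  simp only [expDiagonalCurve_apply, norm_smul, Real.norm_eq_abs, Real.abs_exp]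
  exact (Real.tendsto_exp_atTop.comp (tendsto_id.atTop_mul_const' hμ)).atTop_mul_const
    (norm_pos_iff.2 hci)

theorem tendsto_norm_expDiagonalCurve_cocompact (hpos : ∃ i, c i ≠ 0 ∧ 0 < μ i)
    (hneg : ∃ i, c i ≠ 0 ∧ μ i < 0) :
    Tendsto (‖expDiagonalCurve μ c ·‖) (cocompact ℝ) atTop := by
  obtain ⟨i, hci, hi⟩ := hpos
  obtain ⟨j, hcj, hj⟩ := hneg
  rw [cocompact_eq_atBot_atTop, tendsto_sup]
  refine ⟨?_, tendsto_norm_expDiagonalCurve_atTop μ c hci hi⟩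
  have := (tendsto_norm_expDiagonalCurve_atTop (-μ) c (i := j) hcj (by simpa)).comp
    tendsto_neg_atBot_atTop
  simpa [Function.comp_def, expDiagonalCurve_neg] using this

theorem strictMono_norm_expDiagonalCurve (hμ : ∀ i, c i ≠ 0 → 0 ≤ μ i)
    (hpos : ∃ i, c i ≠ 0 ∧ 0 < μ i) : StrictMono (‖expDiagonalCurve μ c ·‖) := by
  intro s t hst
  obtain ⟨j, hcj, hj⟩ := hpos
  rw [← sq_lt_sq₀ (norm_nonneg _) (norm_nonneg _), norm_expDiagonalCurve_sq,
    norm_expDiagonalCurve_sq]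
  refine Finset.sum_lt_sum (fun i _ => ?_) ⟨j, Finset.mem_univ j, ?_⟩
  · by_cases hci : c i = 0
    · simp [hci]
    · have := hμ i hci
      gcongr
  · have := norm_pos_iff.2 hcj
    gcongr

theorem not_exists_forall_norm_le_expDiagonalCurve (hμ : ∀ i, c i ≠ 0 → 0 ≤ μ i)
    (hpos : ∃ i, c i ≠ 0 ∧ 0 < μ i) :
    ¬ ∃ t₀, ∀ t, ‖expDiagonalCurve μ c t₀‖ ≤ ‖expDiagonalCurve μ c t‖ := fun ⟨t₀, h⟩ =>
  (h (t₀ - 1)).not_gt (strictMono_norm_expDiagonalCurve μ c hμ hpos (sub_one_lt t₀))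

theorem not_isClosed_range_expDiagonalCurve (hμ : ∀ i, c i ≠ 0 → 0 ≤ μ i)
    (hpos : ∃ i, c i ≠ 0 ∧ 0 < μ i) : ¬ IsClosed (range (expDiagonalCurve μ c)) :=
  let ⟨_, hw⟩ := tendsto_expDiagonalCurve_atBot μ c hμ
  not_isClosed_range_of_strictMono_norm (strictMono_norm_expDiagonalCurve μ c hμ hpos) hw

theorem exists_forall_norm_le_iff_isClosed_range_expDiagonalCurve :
    (∃ t₀, ∀ t, ‖expDiagonalCurve μ c t₀‖ ≤ ‖expDiagonalCurve μ c t‖) ↔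
      IsClosed (range (expDiagonalCurve μ c)) := by
  by_cases hpos : ∃ i, c i ≠ 0 ∧ 0 < μ i <;> by_cases hneg : ∃ i, c i ≠ 0 ∧ μ i < 0
  · have h := tendsto_norm_expDiagonalCurve_cocompact μ c hpos hneg
    exact iff_of_true ((continuous_expDiagonalCurve μ c).norm.exists_forall_le h)
      (isClosed_range_of_tendsto_norm_cocompact (continuous_expDiagonalCurve μ c) h)
  · push Not at hneg
    exact iff_of_false (not_exists_forall_norm_le_expDiagonalCurve μ c hneg hpos)
      (not_isClosed_range_expDiagonalCurve μ c hneg hpos)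
  · push Not at hpos
    have hμ' : ∀ i, c i ≠ 0 → 0 ≤ (-μ) i := fun i hi => neg_nonneg.2 (hpos i hi)
    have hpos' : ∃ i, c i ≠ 0 ∧ 0 < (-μ) i :=
      let ⟨i, hi, h⟩ := hneg; ⟨i, hi, neg_pos.2 h⟩
    refine iff_of_false (fun ⟨t₀, h⟩ => not_exists_forall_norm_le_expDiagonalCurve _ c hμ' hpos'
      ⟨-t₀, fun t => by simpa [expDiagonalCurve_neg] using h (-t)⟩) ?_
    rw [← neg_surjective.range_comp, ← expDiagonalCurve_neg]
    exact not_isClosed_range_expDiagonalCurve _ c hμ' hpos'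
  · push Not at hpos hneg
    have hconst := expDiagonalCurve_eq_self μ c fun i hi => (hpos i hi).antisymm (hneg i hi)
    refine iff_of_true ⟨0, fun t => by rw [hconst, hconst]⟩ ?_
    rw [show expDiagonalCurve μ c = fun _ => c from funext hconst, range_const]
    exact isClosed_singleton

end ExpDiagonalCurve

theorem RCLike.exp_ofReal {𝕜 : Type*} [RCLike 𝕜] (r : ℝ) :
    NormedSpace.exp (r : 𝕜) = Real.exp r := by
  rw [Real.exp_eq_exp_ℝ]
  exact (NormedSpace.algebraMap_exp_comm r).symm

theorem LinearMap.IsSymmetric.exp_ofReal_smul_apply_eq_expDiagonalCurve {𝕜 E : Type*}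
    [RCLike 𝕜] [NormedAddCommGroup E] [InnerProductSpace 𝕜 E] [FiniteDimensional 𝕜 E]
    {T : E →L[𝕜] E} (hT : (T : E →ₗ[𝕜] E).IsSymmetric) {n : ℕ} (hn : Module.finrank 𝕜 E = n)
    (t : ℝ) (v : E) :
    NormedSpace.exp ((t : 𝕜) • T) v = (hT.eigenvectorBasis hn).repr.symm
      (expDiagonalCurve (hT.eigenvalues hn) ((hT.eigenvectorBasis hn).repr v) t) := by
  have := FiniteDimensional.complete 𝕜 E
  set b := hT.eigenvectorBasis hn
  have hexp (i : Fin n) : NormedSpace.exp ((t : 𝕜) • T) (b i) =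
      (Real.exp (t * hT.eigenvalues hn i) : 𝕜) • b i := by
    have hTb : ((t : 𝕜) • T) (b i) = ((t * hT.eigenvalues hn i : ℝ) : 𝕜) • b i := by
      rw [FunLike.coe_smul, Pi.smul_apply, ← ContinuousLinearMap.coe_coe,
        hT.apply_eigenvectorBasis, smul_smul, RCLike.ofReal_mul]
    rw [NormedSpace.exp_apply_of_apply_eq_smul hTb, RCLike.exp_ofReal]
  conv_lhs => rw [← b.sum_repr v]
  simp [← b.sum_repr_symm, expDiagonalCurve, hexp, RCLike.real_smul_eq_coe_mul, smul_smul,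
    mul_comm]

theorem kempfNess_min_iff_closed_orbit_general (V : Type*) [NormedAddCommGroup V]
    [InnerProductSpace ℂ V] [FiniteDimensional ℂ V]
    (T : V →L[ℂ] V) (hT : IsSelfAdjoint T) (v : V) :
    (∃ t₀ : ℝ, ∀ t : ℝ,
        ‖NormedSpace.exp ((t₀ : ℂ) • T) v‖ ≤ ‖NormedSpace.exp ((t : ℂ) • T) v‖) ↔
      IsClosed {x : V | ∃ t : ℝ, x = NormedSpace.exp ((t : ℂ) • T) v} := by
  obtain ⟨n, hn⟩ : ∃ n, Module.finrank ℂ V = n := ⟨_, rfl⟩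
  set b := hT.isSymmetric.eigenvectorBasis hn
  set γ := expDiagonalCurve (hT.isSymmetric.eigenvalues hn) (b.repr v)
  have horbit (t : ℝ) : NormedSpace.exp ((t : ℂ) • T) v = b.repr.symm (γ t) :=
    hT.isSymmetric.exp_ofReal_smul_apply_eq_expDiagonalCurve hn t v
  have hset : {x | ∃ t, x = b.repr.symm (γ t)} = b.repr.symm.toHomeomorph '' range γ := by
    ext x
    simp [eq_comm]
  simp only [horbit, LinearIsometryEquiv.norm_map]
  rw [hset, Homeomorph.isClosed_image]
  exact exists_forall_norm_le_iff_isClosed_range_expDiagonalCurve _ _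

/-- **One-parameter Kempf–Ness theorem.** For a self-adjoint operator `T` on a
finite-dimensional complex inner product space and nonzero `v`, the function
`t ↦ ‖exp(tT) v‖` attains a global minimum on `ℝ` if and only if the orbit
`{exp(tT) v : t ∈ ℝ}` is closed in `V`. -/
theorem kempfNess_min_iff_closed_orbit (V : Type*) [NormedAddCommGroup V]
    [InnerProductSpace ℂ V] [FiniteDimensional ℂ V]
    (T : V →L[ℂ] V) (hT : IsSelfAdjoint T) (v : V) (hv : v ≠ 0) :
    (∃ t₀ : ℝ, ∀ t : ℝ,
        ‖NormedSpace.exp ((t₀ : ℂ) • T) v‖ ≤ ‖NormedSpace.exp ((t : ℂ) • T) v‖) ↔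
      IsClosed {x : V | ∃ t : ℝ, x = NormedSpace.exp ((t : ℂ) • T) v} :=
  kempfNess_min_iff_closed_orbit_general V T hT v
end

section
/- Let E be a finite-dimensional real inner product space, f : E → ℝ convex and Lipschitz, and let μ_f denote its asymptotic slope. Then f(x) → +∞ as ‖x‖ → ∞ (equivalently, f is proper and bounded below) if and only if μ_f(ξ) > 0 for every nonzero ξ ∈ E. -/
open Filter

private lemma slope_mono' {E : Type*} [NormedAddCommGroup E] [InnerProductSpace ℝ E]
    {f : E → ℝ} (hconv : ConvexOn ℝ Set.univ f) (ξ : E) {s t : ℝ}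
    (hs : 0 < s) (hst : s ≤ t) :
    (f (s • ξ) - f 0) / s ≤ (f (t • ξ) - f 0) / t := by
  have ht : 0 < t := hs.trans_le hst
  have h1 : f (s • ξ) ≤ (s / t) * f (t • ξ) + (1 - s / t) * f 0 := by
    have ha : (0 : ℝ) ≤ s / t := div_nonneg hs.le ht.le
    have hb : (0 : ℝ) ≤ 1 - s / t := by
      rw [sub_nonneg]; exact div_le_one_of_le₀ hst ht.le
    have hab : s / t + (1 - s / t) = 1 := by ring
    have h := hconv.2 (Set.mem_univ (t • ξ)) (Set.mem_univ (0 : E)) ha hb hab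
    rwa [smul_zero, add_zero, smul_smul, div_mul_cancel₀ _ ht.ne', smul_eq_mul,
      smul_eq_mul] at h
  have e1 : t * (s / t) = s := by field_simp
  have e2 : t * (1 - s / t) = t - s := by field_simp
  have h2' : t * f (s • ξ) ≤ s * f (t • ξ) + (t - s) * f 0 := by
    calc t * f (s • ξ) ≤ t * (s / t * f (t • ξ) + (1 - s / t) * f 0) :=
          mul_le_mul_of_nonneg_left h1 ht.le
      _ = t * (s / t) * f (t • ξ) + t * (1 - s / t) * f 0 := by ring
      _ = s * f (t • ξ) + (t - s) * f 0 := by rw [e1, e2]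
  rw [div_le_div_iff₀ hs ht]
  linarith

private lemma qtendsto' {E : Type*} [NormedAddCommGroup E] [InnerProductSpace ℝ E]
    {f : E → ℝ} {μξ : ℝ} {ξ : E}
    (hμ : Tendsto (fun t : ℝ => f (t • ξ) / t) atTop (nhds μξ)) :
    Tendsto (fun t : ℝ => (f (t • ξ) - f 0) / t) atTop (nhds μξ) := by
  have h0 : Tendsto (fun t : ℝ => f 0 / t) atTop (nhds 0) :=
    tendsto_const_nhds.div_atTop tendsto_id
  simpa [sub_div] using hμ.sub h0

private lemma slope_le_mu' {E : Type*} [NormedAddCommGroup E] [InnerProductSpace ℝ E]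
    {f : E → ℝ} (hconv : ConvexOn ℝ Set.univ f) {μξ : ℝ} {ξ : E}
    (hμ : Tendsto (fun t : ℝ => f (t • ξ) / t) atTop (nhds μξ))
    {s : ℝ} (hs : 0 < s) : (f (s • ξ) - f 0) / s ≤ μξ := by
  refine ge_of_tendsto (qtendsto' hμ) ?_
  filter_upwards [eventually_ge_atTop s] with t ht
  exact slope_mono' hconv ξ hs ht

/-- **Properness criterion via the asymptotic slope.** Let `f` be a convex
Lipschitz function on a finite-dimensional real inner product space and let `μ`
be its asymptotic slope, `μ ξ = lim_{t → ∞} f (t ξ) / t`.  Then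
`f x → +∞` as `‖x‖ → ∞` (i.e. `f` is proper and bounded below) if and only if
`μ ξ > 0` for every nonzero `ξ`. -/
theorem proper_iff_slope_positive (E : Type*) [NormedAddCommGroup E]
    [InnerProductSpace ℝ E] [FiniteDimensional ℝ E]
    (f : E → ℝ) (L : NNReal)
    (hconv : ConvexOn ℝ Set.univ f) (hlip : LipschitzWith L f)
    (μ : E → ℝ)
    (hμ : ∀ ξ : E, Filter.Tendsto (fun t : ℝ => f (t • ξ) / t) Filter.atTop (nhds (μ ξ))) :
    Filter.Tendsto f (Filter.comap (fun x : E => ‖x‖) Filter.atTop) Filter.atTop ↔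
      ∀ ξ : E, ξ ≠ 0 → 0 < μ ξ := by
  constructor
  · -- properness implies positive slopes
    intro h ξ hξ
    by_contra hμξ
    push_neg at hμξ
    have hxt : Tendsto (fun t : ℝ => t • ξ) atTop (comap (fun x : E => ‖x‖) atTop) := by
      rw [tendsto_comap_iff]
      have : Tendsto (fun t : ℝ => |t| * ‖ξ‖) atTop atTop :=
        tendsto_abs_atTop_atTop.atTop_mul_const (norm_pos_iff.2 hξ)
      simpa [Function.comp_def, norm_smul] using this
    have hf : Tendsto (fun t : ℝ => f (t • ξ)) atTop atTop := h.comp hxt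
    obtain ⟨t, ht1, ht2⟩ :=
      ((hf.eventually_ge_atTop (f 0 + 1)).and (eventually_ge_atTop (1 : ℝ))).exists
    have ht0 : (0 : ℝ) < t := lt_of_lt_of_le one_pos ht2
    have h5 : (f (t • ξ) - f 0) / t ≤ 0 := (slope_le_mu' hconv (hμ ξ) ht0).trans hμξ
    have h6 : f (t • ξ) - f 0 ≤ 0 := by
      have := mul_le_mul_of_nonneg_right h5 ht0.le
      rwa [div_mul_cancel₀ _ ht0.ne', zero_mul] at this
    linarith
  · -- positive slopes imply properness
    intro hpos
    rcases subsingleton_or_nontrivial E with hE | hE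
    · have hempty : (fun x : E => ‖x‖) ⁻¹' Set.Ici 1 = ∅ := by
        ext x
        simp [Subsingleton.elim x (0 : E)]
      have hbot : Filter.comap (fun x : E => ‖x‖) atTop = ⊥ := by
        rw [← Filter.empty_mem_iff_bot]
        exact ⟨Set.Ici 1, Ici_mem_atTop 1, by rw [hempty]⟩
      rw [hbot]; exact tendsto_bot
    · set L' : ℝ := (L : ℝ) + 1 with hL'def
      clear_value L'
      have hL'pos : (0 : ℝ) < L' := by rw [hL'def]; positivity
      have hlip' : LipschitzWith (L + 1) f := hlip.weaken (le_add_right le_rfl)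
      have hsph : ∀ ξ ∈ Metric.sphere (0 : E) 1, 0 < μ ξ := by
        intro ξ hξ
        refine hpos ξ ?_
        intro h0
        rw [mem_sphere_zero_iff_norm, h0] at hξ
        simp at hξ
      -- choose times where the difference quotient is close to the slope
      have hchoice : ∀ ξ : E, ∃ s : ℝ, 1 ≤ s ∧
          (0 < μ ξ → μ ξ / 2 < (f (s • ξ) - f 0) / s) := by
        intro ξ
        by_cases hμξ : 0 < μ ξ
        · have hev : ∀ᶠ t in atTop, μ ξ / 2 < (f (t • ξ) - f 0) / t :=
            (qtendsto' (hμ ξ)).eventually (eventually_gt_nhds (by linarith))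
          obtain ⟨s, hs1, hs2⟩ := (hev.and (eventually_ge_atTop (1 : ℝ))).exists
          exact ⟨s, hs2, fun _ => hs1⟩
        · exact ⟨1, le_rfl, fun h => absurd h hμξ⟩
      choose tf htf1 htf2 using hchoice
      -- compactness of the sphere
      obtain ⟨D, hD1, hD2⟩ := (isCompact_sphere (0 : E) 1).elim_nhds_subcover
        (fun ξ => Metric.ball ξ (μ ξ / (4 * L')))
        (fun ξ hξ => Metric.ball_mem_nhds ξ (by have := hsph ξ hξ; positivity))
      obtain ⟨ξ0, hξ0⟩ := (NormedSpace.sphere_nonempty (x := (0 : E))).mpr zero_le_one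
      have hDne : D.Nonempty := by
        obtain ⟨i, hi, -⟩ := Set.mem_iUnion₂.1 (hD2 hξ0)
        exact ⟨i, hi⟩
      set T : ℝ := ∑ ξ ∈ D, tf ξ with hTdef
      clear_value T
      have hT1 : ∀ ξ ∈ D, tf ξ ≤ T := by
        rw [hTdef]
        exact fun ξ hξ => Finset.single_le_sum (fun i _ => by linarith [htf1 i]) hξ
      have hTpos : (1 : ℝ) ≤ T := by
        obtain ⟨j, hj⟩ := hDne
        exact le_trans (htf1 j) (hT1 j hj)
      set c : ℝ := D.inf' hDne (fun ξ => μ ξ / 4) with hcdef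
      clear_value c
      have hcpos : 0 < c := by
        rw [hcdef, Finset.lt_inf'_iff]
        intro ξ hξ
        have := hsph ξ (hD1 ξ hξ)
        linarith
      have hmain : ∀ x : E, T ≤ ‖x‖ → f 0 + c * ‖x‖ ≤ f x := by
        intro x hx
        have hxpos : (0 : ℝ) < ‖x‖ := lt_of_lt_of_le (by linarith) hx
        set η := ‖x‖⁻¹ • x with hηdef
        clear_value η
        have hη : ‖η‖ = 1 := by
          rw [hηdef, norm_smul, Real.norm_eq_abs, abs_of_nonneg (inv_nonneg.2 hxpos.le),
            inv_mul_cancel₀ hxpos.ne']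
        have hηs : η ∈ Metric.sphere (0 : E) 1 := by
          rwa [mem_sphere_zero_iff_norm]
        obtain ⟨i, hiD, hiball⟩ := Set.mem_iUnion₂.1 (hD2 hηs)
        have hμi : 0 < μ i := hsph i (hD1 i hiD)
        have hti : (1 : ℝ) ≤ tf i := htf1 i
        have hti0 : (0 : ℝ) < tf i := lt_of_lt_of_le one_pos hti
        have hqi : μ i / 2 < (f (tf i • i) - f 0) / tf i := htf2 i hμi
        have hdist : ‖η - i‖ < μ i / (4 * L') := by
          rwa [Metric.mem_ball, dist_eq_norm] at hiball
        -- Lipschitz comparison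
        have hlipb : |f (tf i • η) - f (tf i • i)| ≤ L' * (tf i * ‖η - i‖) := by
          have h := hlip'.dist_le_mul (tf i • η) (tf i • i)
          rw [Real.dist_eq, dist_eq_norm, ← smul_sub, norm_smul, Real.norm_eq_abs,
            abs_of_nonneg hti0.le] at h
          calc |f (tf i • η) - f (tf i • i)| ≤ ((L + 1 : NNReal) : ℝ) * (tf i * ‖η - i‖) := h
            _ = L' * (tf i * ‖η - i‖) := by push_cast [hL'def]; ring
        have h3 : f (tf i • i) - L' * (tf i * ‖η - i‖) ≤ f (tf i • η) := by
          have := (abs_le.1 hlipb).1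
          linarith
        have h5 : μ i / 2 * tf i < f (tf i • i) - f 0 := (lt_div_iff₀ hti0).1 hqi
        have h4 : L' * ‖η - i‖ < μ i / 4 := by
          have h6 : L' * (μ i / (4 * L')) = μ i / 4 := by field_simp
          calc L' * ‖η - i‖ < L' * (μ i / (4 * L')) := by
                exact mul_lt_mul_of_pos_left hdist hL'pos
            _ = μ i / 4 := h6
        have h7 : L' * (tf i * ‖η - i‖) < μ i / 4 * tf i := by
          nlinarith [mul_lt_mul_of_pos_right h4 hti0]
        have h1 : μ i / 4 < (f (tf i • η) - f 0) / tf i := by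
          rw [lt_div_iff₀ hti0]
          nlinarith [h3, h5, h7]
        have hci : c ≤ μ i / 4 := hcdef ▸ Finset.inf'_le _ hiD
        have hmono : (f (tf i • η) - f 0) / tf i ≤ (f (‖x‖ • η) - f 0) / ‖x‖ :=
          slope_mono' hconv η hti0 (le_trans (hT1 i hiD) hx)
        have hxη : ‖x‖ • η = x := by
          rw [hηdef, smul_smul, mul_inv_cancel₀ hxpos.ne', one_smul]
        rw [hxη] at hmono
        have h8 : c ≤ (f x - f 0) / ‖x‖ := by linarith
        have h9 : c * ‖x‖ ≤ f x - f 0 := (le_div_iff₀ hxpos).1 h8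
        linarith
      rw [tendsto_atTop]
      intro b
      rw [eventually_comap]
      filter_upwards [eventually_ge_atTop (max T ((b - f 0) / c))] with r hr x hx
      have hxT : T ≤ ‖x‖ := by rw [hx]; exact le_trans (le_max_left _ _) hr
      have h1 := hmain x hxT
      have h2 : (b - f 0) / c ≤ ‖x‖ := by rw [hx]; exact le_trans (le_max_right _ _) hr
      have h3 : b - f 0 ≤ c * ‖x‖ := by
        have := (div_le_iff₀ hcpos).1 h2
        linarith
      linarith
end

section
/- Let E be a real inner product space and let μ : E → ℝ be convex and positively homogeneous. Suppose ξ₀, ξ₁ ∈ E with ‖ξ₀‖ = ‖ξ₁‖ = 1 both attain the infimum m of μ over the unit sphere, and m < 0. Then ξ₀ = ξ₁. That is, when the minimal asymptotic slope is negative, the minimizing unit direction is unique. -/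
/-! A convex positively homogeneous function is subadditive, and it is bounded below by
`m * ‖ξ‖` when `m` bounds it below on the unit sphere. Applied to `ξ₀ + ξ₁` this gives
`m * ‖ξ₀ + ξ₁‖ ≤ μ (ξ₀ + ξ₁) ≤ 2 * m`, so `‖ξ₀ + ξ₁‖ ≥ 2` because `m < 0`. Equality in the
triangle inequality between unit vectors forces `ξ₀ = ξ₁`, the norm of an inner product
space being strictly convex. -/

section PositivelyHomogeneous

variable {E : Type*} {μ : E → ℝ}

theorem ConvexOn.map_add_le_of_posHomogeneous [AddCommGroup E] [Module ℝ E]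
    (hconv : ConvexOn ℝ Set.univ μ) (hhom : ∀ c : ℝ, 0 ≤ c → ∀ ξ : E, μ (c • ξ) = c * μ ξ)
    (x y : E) : μ (x + y) ≤ μ x + μ y := by
  have hmid := hconv.2 (Set.mem_univ x) (Set.mem_univ y) (by norm_num : (0 : ℝ) ≤ 1 / 2)
    (by norm_num : (0 : ℝ) ≤ 1 / 2) (by norm_num)
  calc μ (x + y) = 2 * μ ((1 / 2 : ℝ) • x + (1 / 2 : ℝ) • y) := by
        rw [← smul_add, hhom _ (by norm_num), ← mul_assoc]
        norm_num
    _ ≤ μ x + μ y := by simp only [smul_eq_mul] at hmid; linarith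

theorem mul_norm_le_of_posHomogeneous [NormedAddCommGroup E] [NormedSpace ℝ E]
    (hhom : ∀ c : ℝ, 0 ≤ c → ∀ ξ : E, μ (c • ξ) = c * μ ξ) {m : ℝ}
    (hinf : ∀ ξ : E, ‖ξ‖ = 1 → m ≤ μ ξ) (ξ : E) : m * ‖ξ‖ ≤ μ ξ := by
  rcases (norm_nonneg ξ).eq_or_lt with hξ | hξ
  · obtain rfl : ξ = 0 := norm_eq_zero.1 hξ.symm
    simpa using (hhom 0 le_rfl 0).ge
  · have hunit : ‖‖ξ‖⁻¹ • ξ‖ = 1 := by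
      rw [norm_smul, norm_inv, norm_norm, inv_mul_cancel₀ hξ.ne']
    calc m * ‖ξ‖ ≤ μ (‖ξ‖⁻¹ • ξ) * ‖ξ‖ := mul_le_mul_of_nonneg_right (hinf _ hunit) hξ.le
      _ = μ ξ := by
        rw [hhom _ (inv_nonneg.2 hξ.le), mul_comm, ← mul_assoc, mul_inv_cancel₀ hξ.ne', one_mul]

end PositivelyHomogeneous

/-- **Uniqueness of the maximally destabilizing direction.** Let `μ` be a
convex, positively homogeneous function on a real inner product space.  If two
unit vectors `ξ₀, ξ₁` both attain the infimum `m` of `μ` over the unit sphere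
and `m < 0`, then `ξ₀ = ξ₁`. -/
theorem destabilizing_direction_unique (E : Type*) [NormedAddCommGroup E]
    [InnerProductSpace ℝ E]
    (μ : E → ℝ) (hconv : ConvexOn ℝ Set.univ μ)
    (hhom : ∀ c : ℝ, 0 ≤ c → ∀ ξ : E, μ (c • ξ) = c * μ ξ)
    (m : ℝ) (hm : m < 0)
    (ξ₀ ξ₁ : E) (h₀ : ‖ξ₀‖ = 1) (h₁ : ‖ξ₁‖ = 1)
    (hμ₀ : μ ξ₀ = m) (hμ₁ : μ ξ₁ = m)
    (hinf : ∀ ξ : E, ‖ξ‖ = 1 → m ≤ μ ξ) :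
    ξ₀ = ξ₁ := by
  have hsum : m * ‖ξ₀ + ξ₁‖ ≤ m * 2 :=
    calc m * ‖ξ₀ + ξ₁‖ ≤ μ (ξ₀ + ξ₁) := mul_norm_le_of_posHomogeneous hhom hinf _
      _ ≤ μ ξ₀ + μ ξ₁ := hconv.map_add_le_of_posHomogeneous hhom ξ₀ ξ₁
      _ = m * 2 := by rw [hμ₀, hμ₁]; ring
  have hnorm : ‖ξ₀ + ξ₁‖ = ‖ξ₀‖ + ‖ξ₁‖ :=
    le_antisymm (norm_add_le _ _) <| by
      rw [h₀, h₁, one_add_one_eq_two]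
      exact (mul_le_mul_left_of_neg hm).1 hsum
  exact eq_of_norm_eq_of_norm_add_eq (h₀.trans h₁.symm) hnorm
end

section
/- Let E be a real inner product space of positive dimension and let μ : E → ℝ be convex and positively homogeneous. If μ vanishes on a nonempty open subset of E, then μ(ξ) ≥ 0 for every ξ ∈ E. -/
/-- If the set of directions of zero slope has nonempty interior then the slope
is everywhere nonnegative: a convex, positively homogeneous function on a real
inner product space of positive dimension that vanishes on a nonempty open set
is nonnegative. -/
theorem slope_nonneg_of_vanishing_on_open (E : Type*) [NormedAddCommGroup E]
    [InnerProductSpace ℝ E] [Nontrivial E]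
    (μ : E → ℝ) (hconv : ConvexOn ℝ Set.univ μ)
    (hhom : ∀ c : ℝ, 0 ≤ c → ∀ ξ : E, μ (c • ξ) = c * μ ξ)
    (U : Set E) (hU : IsOpen U) (hUne : U.Nonempty) (hvanish : ∀ ξ ∈ U, μ ξ = 0) :
    ∀ ξ : E, 0 ≤ μ ξ := by
  -- subadditivity
  have hsub : ∀ a b : E, μ (a + b) ≤ μ a + μ b := by
    intro a b
    have h := hconv.2 (Set.mem_univ a) (Set.mem_univ b)
      (by norm_num : (0:ℝ) ≤ 1/2) (by norm_num : (0:ℝ) ≤ 1/2) (by norm_num)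
    have h2 : μ ((1/2 : ℝ) • (a + b)) = (1/2) * μ (a + b) := hhom _ (by norm_num) _
    rw [smul_add] at h2
    simp only [smul_eq_mul] at h
    linarith
  intro ξ
  obtain ⟨x₀, hx₀⟩ := hUne
  obtain ⟨r, hr, hball⟩ := Metric.isOpen_iff.mp hU x₀ hx₀
  have hμx₀ : μ x₀ = 0 := hvanish _ hx₀
  -- choose small t > 0 with ‖t • ξ‖ < r
  obtain ⟨t, ht, htr⟩ : ∃ t : ℝ, 0 < t ∧ t * ‖ξ‖ < r := by
    rcases eq_or_ne ξ 0 with h | h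
    · exact ⟨1, one_pos, by simp [h, hr]⟩
    · have hn : 0 < ‖ξ‖ := norm_pos_iff.mpr h
      refine ⟨r / (2 * ‖ξ‖), by positivity, ?_⟩
      rw [div_mul_eq_mul_div, mul_comm 2 ‖ξ‖, ← div_div]
      have : ‖ξ‖ ≠ 0 := norm_ne_zero_iff.mpr h
      rw [mul_div_assoc, div_self this, mul_one]
      linarith
  have hmem : x₀ - t • ξ ∈ U := by
    apply hball
    simp only [Metric.mem_ball, dist_eq_norm]
    simpa [norm_smul, abs_of_pos ht] using htr
  have h0 : μ (x₀ - t • ξ) = 0 := hvanish _ hmem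
  have := hsub (x₀ - t • ξ) (t • ξ)
  rw [sub_add_cancel, hμx₀, h0, hhom t ht.le] at this
  nlinarith
end
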